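/- Let a₁, …, a_{2n+2} be pairwise distinct complex numbers with a_ℓ² ≠ a_k² for ℓ ≠ k. Then Σ_{S ⊆ {1,…,2n+2}, |S| = n} [ ∏_{j∈S} a_j / ∏_{j∈S} ∏_{ℓ∉S} (a_ℓ² − a_j²) ] multiplied by ∏_{1 ≤ ℓ < k ≤ 2n+2} (a_ℓ + a_k) is a polynomial identity: it equals (−1)^{n(n+1)/2} · Σ_{ℓ=1}^{2n+2} a_ℓ. In particular, for n = 2 and pairwise distinct a₁,…,a₆ with distinct squares: Σ_{1≤ℓ₁<ℓ₂≤6} a_{ℓ₁} a_{ℓ₂} / ∏_{j∈{ℓ₁,ℓ₂}} ∏_{ℓ∉{ℓ₁,ℓ₂}} (a_ℓ² − a_j²) = −(a₁+⋯+a₆) / ∏_{1≤ℓ<k≤6} (a_ℓ + a_k). -/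

import Mathlib

/-!
Put `x = a²`. Since `∏_{ℓ<k} (a_k - a_ℓ) · ∏_{ℓ<k} (a_ℓ + a_k) = ∏_{ℓ<k} (x_k - x_ℓ)`, it suffices
to prove the identity multiplied by the Vandermonde determinant `V(x)`, and then cancel `V(a)`.
Deleting the column `a^(2n+1)` from the Vandermonde matrix of `a` leaves the matrix `G` with
exponents `0, 1, …, 2n, 2n+2`, and `det G = e₁(a) V(a)`: compare the coefficients of `X^(2n+1)` in
the Vandermonde determinant of `(X, a_1, …, a_{2n+2})`. The Laplace expansion of `det G` along its
`n` odd columns is a sum over the `n`-subsets `S` of rows of `±∏_{j∈S} a_j · V(x|_S) · V(x|_{Sᶜ})`,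
which is `±V(x)` times the `S`-th summand. The row sign cancels against the sign of splitting
`V(x)` along `S`, and the column sign is `(-1)^(n(n+1)/2)` for every `S`.
-/

open Finset Matrix Polynomial

theorem Fin.prod_prod_Ioi_add {M : Type*} [CommMonoid M] {m k : ℕ}
    (f : Fin (m + k) → Fin (m + k) → M) :
    ∏ i, ∏ j ∈ Ioi i, f i j =
      (∏ i : Fin m, ∏ j ∈ Ioi i, f (castAdd k i) (castAdd k j)) *
        (∏ i : Fin k, ∏ j ∈ Ioi i, f (natAdd m i) (natAdd m j)) *
        ∏ i : Fin m, ∏ j : Fin k, f (castAdd k i) (natAdd m j) := by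
  have hlt (i : Fin m) (j : Fin k) : castAdd k i < natAdd m j := by
    simp only [lt_def, val_castAdd, val_natAdd]; omega
  have hcast (i j : Fin m) : castAdd k i < castAdd k j ↔ i < j := by
    simp only [lt_def, val_castAdd]
  simp only [← filter_lt_eq_Ioi, prod_filter, prod_univ_add, prod_mul_distrib, hlt,
    (hlt _ _).not_gt, hcast, natAdd_lt_natAdd_iff, if_true, if_false, prod_const_one, mul_one]
  ac_rfl

theorem prod_filter_fst_lt_snd {α M : Type*} [Fintype α] [LinearOrder α]
    [LocallyFiniteOrderTop α] [CommMonoid M] (f : α → α → M) :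
    ∏ p ∈ univ.filter (fun p : α × α => p.1 < p.2), f p.1 p.2 = ∏ i, ∏ j ∈ Ioi i, f i j := by
  rw [prod_filter, Fintype.prod_prod_type]
  simp only [← filter_lt_eq_Ioi, prod_filter]

section SumEquivSign

variable {m k N : ℕ}

def sumEquivSign (h : m + k = N) (e : Fin m ⊕ Fin k ≃ Fin N) : ℤˣ :=
  Equiv.Perm.sign ((finSumFinEquiv.trans (finCongr h)).symm.trans e)

theorem sumEquivSign_mul_self {R : Type*} [Ring R] (h : m + k = N) (e : Fin m ⊕ Fin k ≃ Fin N) :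
    (sumEquivSign h e : R) * sumEquivSign h e = 1 := by
  rw [← Int.cast_mul, ← Units.val_mul, Int.units_mul_self, Units.val_one, Int.cast_one]

theorem sumEquivSign_mul_prod_prod_Ioi {R : Type*} [CommRing R] (h : m + k = N)
    (e : Fin m ⊕ Fin k ≃ Fin N) {f : Fin N → Fin N → R} (hf : ∀ i j, f i j = -f j i) :
    (sumEquivSign h e : R) * ∏ i, ∏ j ∈ Ioi i, f i j =
      (∏ i : Fin m, ∏ j ∈ Ioi i, f (e (.inl i)) (e (.inl j))) *
        (∏ i : Fin k, ∏ j ∈ Ioi i, f (e (.inr i)) (e (.inr j))) *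
        ∏ i : Fin m, ∏ j : Fin k, f (e (.inl i)) (e (.inr j)) := by
  subst h
  rw [sumEquivSign, ← Equiv.Perm.prod_Ioi_comp_eq_sign_mul_prod _ hf, Fin.prod_prod_Ioi_add]
  simp

theorem Matrix.sumEquivSign_mul_det_vandermonde {R : Type*} [CommRing R] (h : m + k = N)
    (e : Fin m ⊕ Fin k ≃ Fin N) (v : Fin N → R) :
    (sumEquivSign h e : R) * (vandermonde v).det =
      (vandermonde fun i => v (e (.inl i))).det * (vandermonde fun i => v (e (.inr i))).det *
        ∏ i : Fin m, ∏ j : Fin k, (v (e (.inr j)) - v (e (.inl i))) := by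
  simp only [det_vandermonde]
  exact sumEquivSign_mul_prod_prod_Ioi h e fun i j => (neg_sub _ _).symm

theorem Matrix.det_submatrix_sumEquiv {R : Type*} [CommRing R] (h : m + k = N)
    (M : Matrix (Fin N) (Fin N) R) (r c : Fin m ⊕ Fin k ≃ Fin N) :
    (M.submatrix r c).det = sumEquivSign h r * sumEquivSign h c * M.det := by
  set s := finSumFinEquiv.trans (finCongr h)
  have hM : M.submatrix r c =
      ((M.submatrix id (s.symm.trans c)).submatrix (s.symm.trans r) id).submatrix s s := by
    ext; simp
  rw [hM, det_submatrix_equiv_self, det_permute, det_permute', mul_assoc]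
  rfl

end SumEquivSign

section Laplace

variable {ι : Type*} [Fintype ι] [DecidableEq ι] {m k : ℕ}

theorem Finset.exists_sumEquiv_mem_iff_isLeft (S : Finset ι) (hS : #S = m) (hSc : #Sᶜ = k) :
    ∃ e : Fin m ⊕ Fin k ≃ ι, ∀ u, e u ∈ S ↔ u.isLeft :=
  ⟨(Equiv.sumCongr (S.equivFinOfCardEq hS).symm
      ((Sᶜ.equivFinOfCardEq hSc).symm.trans (Equiv.subtypeEquivRight fun _ => mem_compl))).trans
    (Equiv.sumCompl (· ∈ S)), by
      rintro (u | u)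
      · simp
      · simpa using mem_compl.mp ((Sᶜ.equivFinOfCardEq hSc).symm u).2⟩

theorem Finset.prod_eq_prod_inl {α β M : Type*} [Fintype α] [Fintype β] [CommMonoid M]
    {S : Finset ι} {e : α ⊕ β ≃ ι} (he : ∀ u, e u ∈ S ↔ u.isLeft) (f : ι → M) :
    ∏ i ∈ S, f i = ∏ a, f (e (.inl a)) := by
  rw [← univ_inter S, ← prod_ite_mem, ← e.prod_comp, Fintype.prod_sum_type]
  simp [he]

theorem Finset.prod_compl_eq_prod_inr {α β M : Type*} [Fintype α] [Fintype β] [CommMonoid M]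
    {S : Finset ι} {e : α ⊕ β ≃ ι} (he : ∀ u, e u ∈ S ↔ u.isLeft) (f : ι → M) :
    ∏ i ∈ Sᶜ, f i = ∏ b, f (e (.inr b)) := by
  rw [← univ_inter Sᶜ, ← prod_ite_mem, ← e.prod_comp, Fintype.prod_sum_type]
  simp [he]

namespace Matrix

variable {R K : Type*} [CommRing R] [Field K]

theorem det_eq_zero_of_rows_supported (M : Matrix ι ι K) {T C : Finset ι} (hTC : #C < #T)
    (hM : ∀ i ∈ T, ∀ j ∉ C, M i j = 0) : M.det = 0 := by
  by_contra hdet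
  have hli : LinearIndependent K (M.submatrix ((↑) : T → ι) id).row :=
    (linearIndependent_rows_of_det_ne_zero hdet).comp _ Subtype.val_injective
  have hrank := hli.rank_matrix
  rw [← rank_transpose] at hrank
  have hle := (M.submatrix ((↑) : T → ι) id)ᵀ.rank_le_card_of_support_subset C fun j hj => by
    by_contra hjC
    exact hj (funext fun i => hM i i.2 j hjC)
  simp only [hrank, Fintype.card_coe] at hle
  omega

def laplaceBlock (M : Matrix ι ι R) (S C : Finset ι) : Matrix ι ι R :=
  of fun i j => if (i ∈ S ↔ j ∈ C) then M i j else 0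

theorem det_eq_sum_det_laplaceBlock (M : Matrix ι ι K) (C : Finset ι) :
    M.det = ∑ S ∈ powersetCard #C univ, (M.laplaceBlock S C).det := by
  set A : Matrix ι ι K := of fun i j => if j ∈ C then M i j else 0
  set B : Matrix ι ι K := of fun i j => if j ∈ C then 0 else M i j
  have hAB : M = A + B := by
    ext i j; by_cases hj : j ∈ C <;> simp [A, B, hj]
  have hpiecewise (S : Finset ι) : S.piecewise A B = M.laplaceBlock S C := by
    ext i j
    by_cases hi : i ∈ S <;> by_cases hj : j ∈ C <;> simp [A, B, laplaceBlock, piecewise, hi, hj]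
  have hexpand : detRowAlternating (A + B : ι → ι → K) =
      ∑ S : Finset ι, detRowAlternating (S.piecewise (A : ι → ι → K) B) :=
    detRowAlternating.map_add_univ _ _
  have hvanish (S : Finset ι) (hS : S ∉ powersetCard #C univ) : (M.laplaceBlock S C).det = 0 := by
    rw [mem_powersetCard_univ] at hS
    rcases lt_or_gt_of_ne hS with hlt | hgt
    · refine det_eq_zero_of_rows_supported _ (T := Sᶜ) (C := Cᶜ) ?_ fun i hi j hj => ?_
      · simp only [card_compl]; have := card_le_univ C; omega
      · simp_all [laplaceBlock]
    · exact det_eq_zero_of_rows_supported _ hgt fun i hi j hj => by simp_all [laplaceBlock]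
  calc M.det = ∑ S, (M.laplaceBlock S C).det := by
        simp only [← hpiecewise]
        rw [hAB]
        exact hexpand
    _ = _ := (sum_subset (subset_univ _) fun S _ hS => hvanish S hS).symm

theorem det_laplaceBlock {N : ℕ} (h : m + k = N) (M : Matrix (Fin N) (Fin N) R)
    {S C : Finset (Fin N)} {r c : Fin m ⊕ Fin k ≃ Fin N} (hr : ∀ u, r u ∈ S ↔ u.isLeft)
    (hc : ∀ u, c u ∈ C ↔ u.isLeft) :
    sumEquivSign h r * sumEquivSign h c * (M.laplaceBlock S C).det =
      (M.submatrix (r ∘ .inl) (c ∘ .inl)).det * (M.submatrix (r ∘ .inr) (c ∘ .inr)).det := by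
  have hblocks : (M.laplaceBlock S C).submatrix r c =
      fromBlocks (M.submatrix (r ∘ .inl) (c ∘ .inl)) 0 0 (M.submatrix (r ∘ .inr) (c ∘ .inr)) := by
    ext (i | i) (j | j) <;> simp [laplaceBlock, hr, hc]
  rw [← det_submatrix_sumEquiv h, hblocks, det_fromBlocks_zero₂₁]

end Matrix

end Laplace

namespace Matrix

variable {R : Type*} [CommRing R] {N : ℕ}

theorem det_vandermonde_sq (a : Fin N → R) :
    (vandermonde fun i => a i ^ 2).det = (vandermonde a).det * ∏ i, ∏ j ∈ Ioi i, (a i + a j) := by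
  simp only [det_vandermonde, ← prod_mul_distrib]
  exact prod_congr rfl fun _ _ => prod_congr rfl fun _ _ => by ring

theorem det_vandermonde_cons (x : R) (v : Fin N → R) :
    (vandermonde (Fin.cons x v)).det =
      ∑ p : Fin (N + 1), (-1) ^ (p : ℕ) * x ^ (p : ℕ) *
        (of fun i q => v i ^ (p.succAbove q : ℕ)).det := by
  rw [det_succ_row_zero]
  rfl

theorem det_of_pow_succAbove (a : Fin N → R) (j : Fin (N + 1)) :
    (of fun i p => a i ^ (j.succAbove p : ℕ)).det =
      (univ.val.map a).esymm (N - j) * (vandermonde a).det := by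
  have hroots : ∏ i, (C (a i) - X) = C ((-1) ^ N) * ((univ.val.map a).map (X - C ·)).prod := by
    rw [Multiset.map_map, ← Finset.prod_eq_multiset_prod]
    simp only [← neg_sub X, prod_neg, card_univ, Fintype.card_fin, Function.comp_apply]
    simp
  have hprod : (vandermonde (Fin.cons X fun i => C (a i))).det =
      C ((-1) ^ N * (vandermonde a).det) * ((univ.val.map a).map (X - C ·)).prod := by
    rw [det_vandermonde, det_vandermonde, Fin.prod_univ_succ, Fin.prod_Ioi_zero]
    simp only [Fin.cons_zero, Fin.cons_succ, Fin.prod_Ioi_succ, hroots, map_mul, map_prod, map_sub]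
    ring
  have hterm (p : Fin (N + 1)) : (-1) ^ (p : ℕ) * X ^ (p : ℕ) *
      (of fun i q => C (a i) ^ (p.succAbove q : ℕ)).det =
      C ((-1) ^ (p : ℕ) * (of fun i q => a i ^ (p.succAbove q : ℕ)).det) * X ^ (p : ℕ) := by
    rw [map_mul, RingHom.map_det, RingHom.mapMatrix_apply]
    simp only [map_pow, map_neg, map_one, Matrix.map, of_apply]
    ring
  have hcoeff := congrArg (coeff · j) (hprod.symm.trans (det_vandermonde_cons X _))
  simp only [hterm, coeff_C_mul, finsetSum_coeff, coeff_X_pow, mul_ite, mul_one, mul_zero,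
    Fin.val_inj, sum_ite_eq, mem_univ, if_true] at hcoeff
  rw [Multiset.prod_X_sub_C_coeff _ (by simpa using j.is_le)] at hcoeff
  simp only [Multiset.card_map, card_val, card_univ, Fintype.card_fin] at hcoeff
  have hsign : ((-1 : R) ^ (j : ℕ)) * (-1) ^ (N - j) = (-1) ^ N := by
    rw [← pow_add, Nat.add_sub_cancel' (Nat.lt_succ_iff.mp j.is_lt)]
  have hsq (t : ℕ) : ((-1 : R) ^ t) * (-1) ^ t = 1 := by rw [← mul_pow]; simp
  linear_combination (-(-1 : R) ^ (j : ℕ)) * hcoeff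
    + (univ.val.map a).esymm (N - j) * (vandermonde a).det * hsq N
    + (-1) ^ N * (univ.val.map a).esymm (N - j) * (vandermonde a).det * hsign
    - (of fun i q => a i ^ (j.succAbove q : ℕ)).det * hsq j

end Matrix

theorem Fin.prod_ite_lt_one_neg_one {m i : ℕ} (hi : i < m) :
    ∏ k : Fin m, (if i < (k : ℕ) then (1 : ℤ) else -1) = (-1) ^ (i + 1) := by
  rw [prod_ite, prod_const_one, one_mul, Finset.prod_const]
  have hfilter : univ.filter (fun k : Fin m => ¬ i < (k : ℕ)) = Iic ⟨i, hi⟩ := by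
    ext k; simp [Fin.le_def]
  rw [hfilter, Fin.card_Iic]

theorem Fin.sum_val_add_one (n : ℕ) : ∑ i : Fin n, ((i : ℕ) + 1) = n * (n + 1) / 2 := by
  have h := sum_range_succ' (fun i => i) n
  rw [add_zero] at h
  rw [Fin.sum_univ_eq_sum_range (· + 1), ← h, sum_range_id, Nat.add_sub_cancel, mul_comm]

theorem StrictMono.prod_prod_Ioi_sign_sub {m : ℕ} {v : Fin m → ℤ} (hv : StrictMono v) :
    ∏ i, ∏ j ∈ Ioi i, Int.sign (v j - v i) = 1 :=
  prod_eq_one fun _ _ => prod_eq_one fun _ hj =>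
    Int.sign_eq_one_of_pos (sub_pos.mpr (hv (mem_Ioi.mp hj)))

namespace RationalCn

variable (n : ℕ)

theorem add_add_two_eq : n + (n + 2) = 2 * n + 2 := by omega

noncomputable def columnEquiv : Fin n ⊕ Fin (n + 2) ≃ Fin (2 * n + 2) :=
  Equiv.ofBijective
    (Sum.elim (fun i => ⟨2 * i + 1, by omega⟩) fun k => ⟨min (2 * k) (2 * n + 1), by omega⟩)
    ((Fintype.bijective_iff_injective_and_card _).mpr
      ⟨by rintro (i | i) (j | j) h <;> simp only [Sum.elim_inl, Sum.elim_inr, Fin.ext_iff] at h <;>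
          first | (congr 1; ext; omega) | omega,
        by simp only [Fintype.card_sum, Fintype.card_fin]; omega⟩)

/-- The exponents `0, 1, …, 2n, 2n + 2`. -/
def gapExponent (p : Fin (2 * n + 2)) : ℕ := (Fin.last (2 * n + 1)).castSucc.succAbove p

noncomputable def oddColumns : Finset (Fin (2 * n + 2)) :=
  univ.map (Function.Embedding.inl.trans (columnEquiv n).toEmbedding)

variable {n}

theorem val_columnEquiv_inl (i : Fin n) : (columnEquiv n (.inl i) : ℕ) = 2 * (i : ℕ) + 1 := rfl

theorem val_columnEquiv_inr (k : Fin (n + 2)) :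
    (columnEquiv n (.inr k) : ℕ) = min (2 * (k : ℕ)) (2 * n + 1) := rfl

theorem gapExponent_of_lt_last {p : Fin (2 * n + 2)} (hp : p < Fin.last (2 * n + 1)) :
    gapExponent n p = p := by
  rw [gapExponent, Fin.succAbove_castSucc_of_lt _ _ hp, Fin.val_castSucc]

theorem gapExponent_columnEquiv_inl (i : Fin n) :
    gapExponent n (columnEquiv n (.inl i)) = 2 * i + 1 := by
  rw [gapExponent_of_lt_last (by rw [Fin.lt_def, val_columnEquiv_inl, Fin.val_last]; omega),
    val_columnEquiv_inl]

theorem gapExponent_columnEquiv_inr (k : Fin (n + 2)) :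
    gapExponent n (columnEquiv n (.inr k)) = 2 * k := by
  rcases Nat.lt_or_ge (k : ℕ) (n + 1) with hk | hk
  · rw [gapExponent_of_lt_last (by rw [Fin.lt_def, val_columnEquiv_inr, Fin.val_last]; omega),
      val_columnEquiv_inr]
    omega
  · have hlast : columnEquiv n (.inr k) = Fin.last (2 * n + 1) :=
      Fin.ext (by rw [val_columnEquiv_inr, Fin.val_last]; omega)
    rw [hlast, gapExponent, Fin.succAbove_castSucc_self, Fin.val_succ, Fin.val_last]
    omega

theorem columnEquiv_mem_oddColumns_iff (u : Fin n ⊕ Fin (n + 2)) :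
    columnEquiv n u ∈ oddColumns n ↔ u.isLeft := by
  cases u <;> simp [oddColumns]

theorem card_oddColumns : #(oddColumns n) = n := by
  simp [oddColumns]

theorem det_of_pow_gapExponent {R : Type*} [CommRing R] (a : Fin (2 * n + 2) → R) :
    (of fun i p => a i ^ gapExponent n p).det = (∑ i, a i) * (vandermonde a).det := by
  have hj : 2 * n + 2 - ((Fin.last (2 * n + 1)).castSucc : ℕ) = 1 := by simp
  unfold gapExponent
  rw [det_of_pow_succAbove, hj, esymm_map_val, powersetCard_one, sum_map]
  simp

/-- The inversions of `columnEquiv` are the pairs of an odd column `2i+1` and an even column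
`2k < 2i+1`, so there are `∑ (i + 1)` of them. -/
theorem sumEquivSign_columnEquiv :
    (sumEquivSign (add_add_two_eq n) (columnEquiv n) : ℤ) = (-1) ^ (n * (n + 1) / 2) := by
  have key := sumEquivSign_mul_prod_prod_Ioi (R := ℤ) (add_add_two_eq n) (columnEquiv n)
    (f := fun p q => Int.sign ((q : ℤ) - p)) fun p q => by rw [← neg_sub, Int.sign_neg]
  have hcross (i : Fin n) (k : Fin (n + 2)) :
      Int.sign ((columnEquiv n (.inr k) : ℤ) - columnEquiv n (.inl i)) =
        if (i : ℕ) < k then 1 else -1 := by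
    split_ifs with hik
    · exact Int.sign_eq_one_of_pos (by rw [val_columnEquiv_inl, val_columnEquiv_inr]; omega)
    · exact Int.sign_eq_neg_one_of_neg (by rw [val_columnEquiv_inl, val_columnEquiv_inr]; omega)
  have hmono : StrictMono fun p : Fin (2 * n + 2) => ((p : ℕ) : ℤ) := fun p q h =>
    Nat.cast_lt.mpr h
  have hmono_inl : StrictMono fun i : Fin n => ((columnEquiv n (.inl i) : ℕ) : ℤ) := fun i j h => by
    rw [Fin.lt_def] at h; dsimp only; rw [val_columnEquiv_inl, val_columnEquiv_inl]; omega
  have hmono_inr : StrictMono fun k : Fin (n + 2) => ((columnEquiv n (.inr k) : ℕ) : ℤ) :=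
    fun i j h => by
      rw [Fin.lt_def] at h; dsimp only; rw [val_columnEquiv_inr, val_columnEquiv_inr]; omega
  simp only [hcross, hmono.prod_prod_Ioi_sign_sub, hmono_inl.prod_prod_Ioi_sign_sub,
    hmono_inr.prod_prod_Ioi_sign_sub, Int.cast_id, mul_one, one_mul] at key
  rw [key, prod_congr rfl fun i _ => Fin.prod_ite_lt_one_neg_one (by omega),
    prod_pow_eq_pow_sum, Fin.sum_val_add_one]

/-- The row sign `sumEquivSign r` occurs both in `det_laplaceBlock` and in the splitting of the
Vandermonde determinant of `a ^ 2`, so it cancels. -/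
theorem det_laplaceBlock_mul_prod_sq_sub {R : Type*} [CommRing R] (a : Fin (2 * n + 2) → R)
    {S : Finset (Fin (2 * n + 2))} (hS : #S = n) :
    (sumEquivSign (add_add_two_eq n) (columnEquiv n) : R) *
        ((of fun i p => a i ^ gapExponent n p).laplaceBlock S (oddColumns n)).det *
        ∏ j ∈ S, ∏ l ∈ Sᶜ, (a l ^ 2 - a j ^ 2) =
      (∏ j ∈ S, a j) * (vandermonde fun i => a i ^ 2).det := by
  obtain ⟨r, hr⟩ :=
    S.exists_sumEquiv_mem_iff_isLeft (k := n + 2) hS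
      (by rw [card_compl, hS, Fintype.card_fin]; omega)
  have hblock := det_laplaceBlock (add_add_two_eq n) (of fun i p => a i ^ gapExponent n p) hr
    columnEquiv_mem_oddColumns_iff
  have hodd : (of fun i p => a i ^ gapExponent n p).submatrix (r ∘ .inl) (columnEquiv n ∘ .inl) =
      of fun i j => a (r (.inl i)) * vandermonde (fun i => a (r (.inl i)) ^ 2) i j := by
    ext i j
    simp only [submatrix_apply, Function.comp_apply, of_apply, vandermonde_apply,
      gapExponent_columnEquiv_inl]
    ring
  have heven : (of fun i p => a i ^ gapExponent n p).submatrix (r ∘ .inr) (columnEquiv n ∘ .inr) =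
      vandermonde fun k => a (r (.inr k)) ^ 2 := by
    ext i j; simp [gapExponent_columnEquiv_inr, pow_mul]
  rw [hodd, heven, det_mul_column] at hblock
  have hsplit := sumEquivSign_mul_det_vandermonde (add_add_two_eq n) r fun i => a i ^ 2
  have hr2 := sumEquivSign_mul_self (R := R) (add_add_two_eq n) r
  rw [prod_eq_prod_inl hr, prod_eq_prod_inl hr,
    prod_congr rfl fun i _ => prod_compl_eq_prod_inr hr _]
  linear_combination (-((sumEquivSign (add_add_two_eq n) (columnEquiv n) : R) *
      ((of fun i p => a i ^ gapExponent n p).laplaceBlock S (oddColumns n)).det *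
      ∏ i, ∏ k, (a (r (.inr k)) ^ 2 - a (r (.inl i)) ^ 2)) +
      (∏ i, a (r (.inl i))) * (vandermonde fun i => a i ^ 2).det) * hr2 +
    (sumEquivSign (add_add_two_eq n) r : R) *
      (∏ i, ∏ k, (a (r (.inr k)) ^ 2 - a (r (.inl i)) ^ 2)) * hblock -
    (∏ i, a (r (.inl i))) * (sumEquivSign (add_add_two_eq n) r : R) * hsplit

theorem sum_prod_div_prod_sq_sub_mul_prod_add {K : Type*} [Field K] (a : Fin (2 * n + 2) → K)
    (hsq : ∀ l k, l ≠ k → a l ^ 2 ≠ a k ^ 2) :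
    (∑ S ∈ powersetCard n univ, (∏ j ∈ S, a j) / ∏ j ∈ S, ∏ l ∈ Sᶜ, (a l ^ 2 - a j ^ 2)) *
        ∏ p ∈ univ.filter (fun p : Fin (2 * n + 2) × Fin (2 * n + 2) => p.1 < p.2),
          (a p.1 + a p.2) =
      (-1) ^ (n * (n + 1) / 2) * ∑ l, a l := by
  have hD {S : Finset (Fin (2 * n + 2))} : ∏ j ∈ S, ∏ l ∈ Sᶜ, (a l ^ 2 - a j ^ 2) ≠ 0 :=
    prod_ne_zero_iff.mpr fun j hj => prod_ne_zero_iff.mpr fun l hl =>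
      sub_ne_zero.mpr (hsq l j fun hlj => mem_compl.mp hl (hlj ▸ hj))
  have hsum : (∑ S ∈ powersetCard n univ,
        (∏ j ∈ S, a j) / ∏ j ∈ S, ∏ l ∈ Sᶜ, (a l ^ 2 - a j ^ 2)) *
          (vandermonde fun i => a i ^ 2).det =
      (sumEquivSign (add_add_two_eq n) (columnEquiv n) : K) *
        (of fun i p => a i ^ gapExponent n p).det := by
    rw [det_eq_sum_det_laplaceBlock (of fun i p => a i ^ gapExponent n p) (oddColumns n),
      card_oddColumns, sum_mul, mul_sum]
    refine sum_congr rfl fun S hS => ?_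
    rw [div_mul_eq_mul_div, ← det_laplaceBlock_mul_prod_sq_sub a (mem_powersetCard_univ.mp hS),
      mul_div_assoc, div_self hD, mul_one]
  have hsign : (sumEquivSign (add_add_two_eq n) (columnEquiv n) : K) =
      (-1) ^ (n * (n + 1) / 2) := by
    rw [sumEquivSign_columnEquiv]; push_cast; rfl
  have hinj : Function.Injective a := fun l k hlk =>
    by_contra fun hne => hsq l k hne (by rw [hlk])
  apply mul_right_cancel₀ (det_vandermonde_ne_zero_iff.mpr hinj)
  rw [prod_filter_fst_lt_snd (fun i j => a i + a j), mul_assoc, mul_comm (∏ i, _),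
    ← det_vandermonde_sq, hsum, det_of_pow_gapExponent, hsign]
  ring

end RationalCn

open RationalCn in
theorem rational_Cn_polynomial_identity_general (n : ℕ)
    (a : Fin (2 * n + 2) → ℂ)
    (hsq : ∀ ℓ k, ℓ ≠ k → (a ℓ) ^ 2 ≠ (a k) ^ 2) :
    ((∑ S ∈ Finset.powersetCard n (Finset.univ : Finset (Fin (2 * n + 2))),
        (∏ j ∈ S, a j) / (∏ j ∈ S, ∏ ℓ ∈ Sᶜ, ((a ℓ) ^ 2 - (a j) ^ 2))) *
      ∏ p ∈ Finset.univ.filter (fun p : Fin (2 * n + 2) × Fin (2 * n + 2) => p.1 < p.2),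
        (a p.1 + a p.2) =
      (-1 : ℂ) ^ (n * (n + 1) / 2) * ∑ ℓ, a ℓ) ∧
    (∀ b : Fin 6 → ℂ, (∀ ℓ k, ℓ ≠ k → b ℓ ≠ b k) → (∀ ℓ k, ℓ ≠ k → (b ℓ) ^ 2 ≠ (b k) ^ 2) →
      ∑ S ∈ Finset.powersetCard 2 (Finset.univ : Finset (Fin 6)),
          (∏ j ∈ S, b j) / (∏ j ∈ S, ∏ ℓ ∈ Sᶜ, ((b ℓ) ^ 2 - (b j) ^ 2)) =
        -(∑ ℓ, b ℓ) /
          ∏ p ∈ Finset.univ.filter (fun p : Fin 6 × Fin 6 => p.1 < p.2), (b p.1 + b p.2)) := by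
  refine ⟨sum_prod_div_prod_sq_sub_mul_prod_add a hsq, fun b _ hbsq => ?_⟩
  have hP : ∏ p ∈ univ.filter (fun p : Fin 6 × Fin 6 => p.1 < p.2), (b p.1 + b p.2) ≠ 0 :=
    prod_ne_zero_iff.mpr fun p hp hsum => hbsq p.1 p.2 (mem_filter.mp hp).2.ne
      (by rw [eq_neg_of_add_eq_zero_left hsum, neg_sq])
  rw [eq_div_iff hP, sum_prod_div_prod_sq_sub_mul_prod_add (n := 2) b hbsq]
  norm_num

theorem rational_Cn_polynomial_identity (n : ℕ)
    (a : Fin (2 * n + 2) → ℂ)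
    (hdist : ∀ ℓ k, ℓ ≠ k → a ℓ ≠ a k)
    (hsq : ∀ ℓ k, ℓ ≠ k → (a ℓ) ^ 2 ≠ (a k) ^ 2) :
    ((∑ S ∈ Finset.powersetCard n (Finset.univ : Finset (Fin (2 * n + 2))),
        (∏ j ∈ S, a j) / (∏ j ∈ S, ∏ ℓ ∈ Sᶜ, ((a ℓ) ^ 2 - (a j) ^ 2))) *
      ∏ p ∈ Finset.univ.filter (fun p : Fin (2 * n + 2) × Fin (2 * n + 2) => p.1 < p.2),
        (a p.1 + a p.2) =
      (-1 : ℂ) ^ (n * (n + 1) / 2) * ∑ ℓ, a ℓ) ∧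
    (∀ b : Fin 6 → ℂ, (∀ ℓ k, ℓ ≠ k → b ℓ ≠ b k) → (∀ ℓ k, ℓ ≠ k → (b ℓ) ^ 2 ≠ (b k) ^ 2) →
      ∑ S ∈ Finset.powersetCard 2 (Finset.univ : Finset (Fin 6)),
          (∏ j ∈ S, b j) / (∏ j ∈ S, ∏ ℓ ∈ Sᶜ, ((b ℓ) ^ 2 - (b j) ^ 2)) =
        -(∑ ℓ, b ℓ) /
          ∏ p ∈ Finset.univ.filter (fun p : Fin 6 × Fin 6 => p.1 < p.2), (b p.1 + b p.2)) :=
  rational_Cn_polynomial_identity_general n a hsq
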